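/- Let φ : ℝ^{n×r} → ℝ be differentiable with L-Lipschitz continuous gradient on ℝ^{n×r}, and set L_n := max_{X ∈ St(n,r)} ‖∇φ(X)‖₂ (spectral norm) and L_G := L + 2L_n. Then the Riemannian gradient is Lipschitz on the Stiefel manifold: for all X, Y ∈ St(n,r), ‖grad φ(X) − grad φ(Y)‖_F ≤ L_G‖X − Y‖_F. -/

import Mathlib

open Matrix
open scoped BigOperators

attribute [local instance] Matrix.frobeniusNormedAddCommGroup Matrix.frobeniusNormedSpace

noncomputable section

/-- the Frobenius norm of a real matrix -/
def frob {n r : ℕ} (A : Matrix (Fin n) (Fin r) ℝ) : ℝ :=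
  Real.sqrt (∑ i, ∑ j, (A i j) ^ 2)

/-- the trace inner product ⟨A,B⟩ = tr(AᵀB) -/
def innerF {n r : ℕ} (A B : Matrix (Fin n) (Fin r) ℝ) : ℝ := (Aᵀ * B).trace

/-- the Stiefel manifold St(n,r) -/
def Stiefel (n r : ℕ) : Set (Matrix (Fin n) (Fin r) ℝ) := {X | Xᵀ * X = 1}

/-- orthogonal projection onto the tangent space at X -/
def projT {n r : ℕ} (X Y : Matrix (Fin n) (Fin r) ℝ) : Matrix (Fin n) (Fin r) ℝ :=
  Y - (1 / 2 : ℝ) • (X * (Xᵀ * Y + Yᵀ * X))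

/-- the spectral norm (operator 2-norm) of a matrix -/
def spec {n r : ℕ} (A : Matrix (Fin n) (Fin r) ℝ) : ℝ :=
  ‖LinearMap.toContinuousLinearMap (Matrix.toEuclideanLin A)‖

/-- the Euclidean gradient of φ : ℝ^{n×r} → ℝ (w.r.t. the trace inner product) -/
def egrad {n r : ℕ} (φ : Matrix (Fin n) (Fin r) ℝ → ℝ) (X : Matrix (Fin n) (Fin r) ℝ) :
    Matrix (Fin n) (Fin r) ℝ :=
  fun i j => fderiv ℝ φ X (Matrix.single i j 1)

/-- the Riemannian gradient on the Stiefel manifold: grad φ(X) = P_{T_X}(∇φ(X)) -/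
def rgrad {n r : ℕ} (φ : Matrix (Fin n) (Fin r) ℝ → ℝ) (X : Matrix (Fin n) (Fin r) ℝ) :
    Matrix (Fin n) (Fin r) ℝ :=
  projT X (egrad φ X)


/-!
Split `grad φ(X) − grad φ(Y) = P_X(∇φ(X) − ∇φ(Y)) + (P_X − P_Y)(∇φ(Y))`. The first term is at most
`L‖X − Y‖_F` because `P_X` is an orthogonal projection. In the second, `P_X − P_Y` applied to `G`
is a combination of `XXᵀ − YYᵀ` and `XGᵀX − YGᵀY`, each of which, telescoped through `X − Y`,
is at most `(‖X‖₂ + ‖Y‖₂)‖G‖₂‖X − Y‖_F`, and `‖X‖₂, ‖Y‖₂ ≤ 1` on the Stiefel manifold.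
-/

section StiefelGradient

variable {n r m : ℕ}

lemma spec_eq_l2_opNorm (A : Matrix (Fin n) (Fin r) ℝ) :
    spec A = @Norm.norm _ Matrix.instL2OpNormedAddCommGroup.toNorm A := rfl

lemma spec_nonneg (A : Matrix (Fin n) (Fin r) ℝ) : 0 ≤ spec A := norm_nonneg _

lemma spec_transpose (A : Matrix (Fin n) (Fin r) ℝ) : spec Aᵀ = spec A := by
  simpa [spec_eq_l2_opNorm] using Matrix.l2_opNorm_conjTranspose A

lemma spec_mul_le (A : Matrix (Fin m) (Fin n) ℝ) (B : Matrix (Fin n) (Fin r) ℝ) :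
    spec (A * B) ≤ spec A * spec B :=
  Matrix.l2_opNorm_mul A B

lemma spec_mulVec_le (A : Matrix (Fin m) (Fin n) ℝ) (v : Fin n → ℝ) :
    ‖WithLp.toLp 2 (A *ᵥ v)‖ ≤ spec A * ‖WithLp.toLp 2 v‖ :=
  Matrix.l2_opNorm_mulVec A (WithLp.toLp 2 v)

lemma spec_one_le : spec (1 : Matrix (Fin r) (Fin r) ℝ) ≤ 1 := by
  have hid : LinearMap.toContinuousLinearMap (toEuclideanLin (1 : Matrix (Fin r) (Fin r) ℝ)) =
      ContinuousLinearMap.id ℝ _ := by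
    ext x i
    simp [toEuclideanLin]
  rw [spec, hid]
  exact ContinuousLinearMap.norm_id_le

lemma spec_le_one_of_mem_stiefel {X : Matrix (Fin n) (Fin r) ℝ} (hX : X ∈ Stiefel n r) :
    spec X ≤ 1 := by
  have h := Matrix.l2_opNorm_conjTranspose_mul_self X
  rw [conjTranspose_eq_transpose_of_trivial, show Xᵀ * X = 1 from hX, ← spec_eq_l2_opNorm,
    ← spec_eq_l2_opNorm] at h
  nlinarith [spec_one_le (r := r), spec_nonneg X]

lemma frobenius_norm_sq_eq_sum_row {ι κ : Type*} [Fintype ι] [Fintype κ]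
    (A : Matrix ι κ ℝ) : ‖A‖ ^ 2 = ∑ i, ‖WithLp.toLp 2 (A i)‖ ^ 2 :=
  PiLp.norm_sq_eq_of_L2 _ (WithLp.toLp 2 fun i => WithLp.toLp 2 (A i))

lemma frob_eq_norm (A : Matrix (Fin n) (Fin r) ℝ) : frob A = ‖A‖ := by
  rw [frob, ← Real.sqrt_sq (norm_nonneg A), frobenius_norm_sq_eq_sum_row]
  simp [EuclideanSpace.norm_sq_eq]

lemma norm_mul_le_spec_mul_norm (A : Matrix (Fin m) (Fin n) ℝ) (B : Matrix (Fin n) (Fin r) ℝ) :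
    ‖A * B‖ ≤ spec A * ‖B‖ := by
  have hcol : ∀ j, (A * B)ᵀ j = A *ᵥ Bᵀ j := fun j => by
    ext i
    simp [mul_apply, mulVec, dotProduct]
  have hsq : ‖A * B‖ ^ 2 ≤ (spec A * ‖B‖) ^ 2 := by
    rw [← frobenius_norm_transpose (A * B), ← frobenius_norm_transpose B, mul_pow,
      frobenius_norm_sq_eq_sum_row, frobenius_norm_sq_eq_sum_row, Finset.mul_sum]
    gcongr with j
    rw [← mul_pow, hcol]
    exact pow_le_pow_left₀ (norm_nonneg _) (spec_mulVec_le A (Bᵀ j)) 2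
  exact (pow_le_pow_iff_left₀ (norm_nonneg _) (mul_nonneg (spec_nonneg _) (norm_nonneg _))
    two_ne_zero).mp hsq

lemma norm_mul_le_norm_mul_spec (A : Matrix (Fin m) (Fin n) ℝ) (B : Matrix (Fin n) (Fin r) ℝ) :
    ‖A * B‖ ≤ ‖A‖ * spec B := by
  have h := norm_mul_le_spec_mul_norm Bᵀ Aᵀ
  rwa [← transpose_mul, frobenius_norm_transpose, frobenius_norm_transpose, spec_transpose,
    mul_comm] at h

lemma norm_sq_eq_innerF (A : Matrix (Fin n) (Fin r) ℝ) : ‖A‖ ^ 2 = innerF A A := by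
  rw [← frob_eq_norm, frob, Real.sq_sqrt (by positivity), innerF, Finset.sum_comm]
  simp [trace, mul_apply, sq]

lemma innerF_sub_sub (A B : Matrix (Fin n) (Fin r) ℝ) :
    innerF (A - B) (A - B) = innerF A A - 2 * innerF A B + innerF B B := by
  simp only [innerF, transpose_sub, Matrix.sub_mul, Matrix.mul_sub, trace_sub]
  rw [← trace_transpose (Bᵀ * A), transpose_mul, transpose_transpose]
  ring

def projN (X Z : Matrix (Fin n) (Fin r) ℝ) : Matrix (Fin n) (Fin r) ℝ :=
  (1 / 2 : ℝ) • (X * (Xᵀ * Z + Zᵀ * X))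

lemma projT_eq_sub_projN (X Z : Matrix (Fin n) (Fin r) ℝ) : projT X Z = Z - projN X Z := rfl

lemma innerF_projN {X : Matrix (Fin n) (Fin r) ℝ} (hX : X ∈ Stiefel n r)
    (Z : Matrix (Fin n) (Fin r) ℝ) : innerF Z (projN X Z) = innerF (projN X Z) (projN X Z) := by
  unfold projN
  set S := Xᵀ * Z + Zᵀ * X with hS
  have hSymm : Sᵀ = S := by simp [hS, transpose_mul, add_comm]
  have hXS : ((X * S)ᵀ * (X * S)).trace = (S * S).trace := by
    rw [transpose_mul, hSymm, Matrix.mul_assoc, ← Matrix.mul_assoc Xᵀ,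
      show Xᵀ * X = 1 from hX, Matrix.one_mul]
  have hSS : (S * S).trace = 2 * (Zᵀ * X * S).trace := by
    conv_lhs => rw [hS]
    rw [Matrix.add_mul, trace_add, ← trace_transpose (Xᵀ * Z * S), transpose_mul, transpose_mul,
      transpose_transpose, hSymm, trace_mul_comm]
    ring
  simp only [innerF, transpose_smul, Matrix.smul_mul, Matrix.mul_smul, trace_smul, smul_eq_mul]
  rw [hXS, hSS, Matrix.mul_assoc]
  ring

lemma norm_projT_le {X : Matrix (Fin n) (Fin r) ℝ} (hX : X ∈ Stiefel n r)
    (Z : Matrix (Fin n) (Fin r) ℝ) : ‖projT X Z‖ ≤ ‖Z‖ := by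
  have hsq : ‖projT X Z‖ ^ 2 = ‖Z‖ ^ 2 - ‖projN X Z‖ ^ 2 := by
    rw [norm_sq_eq_innerF, norm_sq_eq_innerF, norm_sq_eq_innerF, projT_eq_sub_projN,
      innerF_sub_sub, innerF_projN hX]
    ring
  exact (pow_le_pow_iff_left₀ (norm_nonneg _) (norm_nonneg _) two_ne_zero).mp
    (by nlinarith [sq_nonneg ‖projN X Z‖])

lemma projT_sub (X A B : Matrix (Fin n) (Fin r) ℝ) :
    projT X (A - B) = projT X A - projT X B := by
  simp only [projT, transpose_sub, Matrix.mul_sub, Matrix.mul_add, Matrix.sub_mul]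
  module

lemma projT_sub_projT (X Y G : Matrix (Fin n) (Fin r) ℝ) :
    projT X G - projT Y G =
      -(1 / 2 : ℝ) • ((X * Xᵀ - Y * Yᵀ) * G + (X * Gᵀ * X - Y * Gᵀ * Y)) := by
  simp only [projT, Matrix.mul_add, Matrix.sub_mul, Matrix.mul_assoc]
  module

lemma norm_mul_transpose_sub_le (A B : Matrix (Fin n) (Fin r) ℝ) :
    ‖A * Aᵀ - B * Bᵀ‖ ≤ (spec A + spec B) * ‖A - B‖ := by
  have h : A * Aᵀ - B * Bᵀ = (A - B) * Aᵀ + B * (A - B)ᵀ := by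
    simp only [transpose_sub, Matrix.sub_mul, Matrix.mul_sub]
    abel
  calc ‖A * Aᵀ - B * Bᵀ‖ ≤ ‖(A - B) * Aᵀ‖ + ‖B * (A - B)ᵀ‖ := h ▸ norm_add_le _ _
    _ ≤ ‖A - B‖ * spec Aᵀ + spec B * ‖(A - B)ᵀ‖ :=
      add_le_add (norm_mul_le_norm_mul_spec _ _) (norm_mul_le_spec_mul_norm _ _)
    _ = (spec A + spec B) * ‖A - B‖ := by
      rw [spec_transpose, frobenius_norm_transpose]
      ring

lemma norm_mul_mul_sub_le (A B : Matrix (Fin n) (Fin r) ℝ) (M : Matrix (Fin r) (Fin n) ℝ) :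
    ‖A * M * A - B * M * B‖ ≤ (spec A + spec B) * spec M * ‖A - B‖ := by
  have h : A * M * A - B * M * B = (A - B) * M * A + B * M * (A - B) := by
    simp only [Matrix.sub_mul, Matrix.mul_sub]
    abel
  have hleft : ‖(A - B) * M * A‖ ≤ ‖A - B‖ * spec M * spec A :=
    (norm_mul_le_norm_mul_spec _ _).trans <| by
      gcongr
      exacts [spec_nonneg _, norm_mul_le_norm_mul_spec _ _]
  have hright : ‖B * M * (A - B)‖ ≤ spec B * spec M * ‖A - B‖ :=
    (norm_mul_le_spec_mul_norm _ _).trans <| by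
      gcongr
      exact spec_mul_le _ _
  calc ‖A * M * A - B * M * B‖ ≤ ‖(A - B) * M * A‖ + ‖B * M * (A - B)‖ := h ▸ norm_add_le _ _
    _ ≤ ‖A - B‖ * spec M * spec A + spec B * spec M * ‖A - B‖ := add_le_add hleft hright
    _ = (spec A + spec B) * spec M * ‖A - B‖ := by ring

lemma norm_projT_sub_projT_le (X Y G : Matrix (Fin n) (Fin r) ℝ) :
    ‖projT X G - projT Y G‖ ≤ (spec X + spec Y) * spec G * ‖X - Y‖ := by
  have hXX := (norm_mul_le_norm_mul_spec (X * Xᵀ - Y * Yᵀ) G).trans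
    (mul_le_mul_of_nonneg_right (norm_mul_transpose_sub_le X Y) (spec_nonneg G))
  have hXGX := norm_mul_mul_sub_le X Y Gᵀ
  rw [spec_transpose] at hXGX
  rw [projT_sub_projT, norm_smul]
  calc ‖-(1 / 2 : ℝ)‖ * ‖(X * Xᵀ - Y * Yᵀ) * G + (X * Gᵀ * X - Y * Gᵀ * Y)‖
      ≤ 1 / 2 * ((spec X + spec Y) * ‖X - Y‖ * spec G + (spec X + spec Y) * spec G * ‖X - Y‖) := by
        rw [norm_neg, Real.norm_of_nonneg (by norm_num)]
        gcongr
        exact (norm_add_le _ _).trans (add_le_add hXX hXGX)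
    _ = (spec X + spec Y) * spec G * ‖X - Y‖ := by ring

end StiefelGradient

theorem riemannian_gradient_lipschitz_general {n r : ℕ}
    (φ : Matrix (Fin n) (Fin r) ℝ → ℝ) (L Ln LG : ℝ)
    (hLip : ∀ X Y : Matrix (Fin n) (Fin r) ℝ, frob (egrad φ X - egrad φ Y) ≤ L * frob (X - Y))
    (hLn : IsGreatest ((fun X => spec (egrad φ X)) '' Stiefel n r) Ln)
    (hLG : LG = L + 2 * Ln)
    (X Y : Matrix (Fin n) (Fin r) ℝ) (hX : X ∈ Stiefel n r) (hY : Y ∈ Stiefel n r) :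
    frob (rgrad φ X - rgrad φ Y) ≤ LG * frob (X - Y) := by
  set G := egrad φ Y
  have hLipXY := hLip X Y
  have hG : spec G ≤ Ln := hLn.2 ⟨Y, hY, rfl⟩
  have hspec : spec X + spec Y ≤ 2 :=
    by linarith [spec_le_one_of_mem_stiefel hX, spec_le_one_of_mem_stiefel hY]
  simp only [frob_eq_norm] at hLipXY ⊢
  have hsplit : rgrad φ X - rgrad φ Y = projT X (egrad φ X - G) + (projT X G - projT Y G) := by
    rw [projT_sub, rgrad, rgrad]
    abel
  calc ‖rgrad φ X - rgrad φ Y‖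
      ≤ ‖projT X (egrad φ X - G)‖ + ‖projT X G - projT Y G‖ := hsplit ▸ norm_add_le _ _
    _ ≤ L * ‖X - Y‖ + (spec X + spec Y) * spec G * ‖X - Y‖ :=
      add_le_add ((norm_projT_le hX _).trans hLipXY) (norm_projT_sub_projT_le X Y G)
    _ ≤ L * ‖X - Y‖ + 2 * Ln * ‖X - Y‖ := by
      gcongr
      exact spec_nonneg G
    _ = LG * ‖X - Y‖ := by
      rw [hLG]
      ring

/-- Lipschitz continuity of the Riemannian gradient on the Stiefel manifold.
If `φ` is differentiable with `L`-Lipschitz Euclidean gradient,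
`L_n = max_{X ∈ St(n,r)} ‖∇φ(X)‖₂` and `L_G = L + 2L_n`, then for all `X, Y ∈ St(n,r)`,
`‖grad φ(X) − grad φ(Y)‖_F ≤ L_G ‖X − Y‖_F`. -/
theorem riemannian_gradient_lipschitz {n r : ℕ}
    (φ : Matrix (Fin n) (Fin r) ℝ → ℝ) (L Ln LG : ℝ)
    (hdiff : Differentiable ℝ φ)
    (hLip : ∀ X Y : Matrix (Fin n) (Fin r) ℝ, frob (egrad φ X - egrad φ Y) ≤ L * frob (X - Y))
    (hLn : IsGreatest ((fun X => spec (egrad φ X)) '' Stiefel n r) Ln)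
    (hLG : LG = L + 2 * Ln)
    (X Y : Matrix (Fin n) (Fin r) ℝ) (hX : X ∈ Stiefel n r) (hY : Y ∈ Stiefel n r) :
    frob (rgrad φ X - rgrad φ Y) ≤ LG * frob (X - Y) :=
  riemannian_gradient_lipschitz_general φ L Ln LG hLip hLn hLG X Y hX hY

end
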